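/- Let G̃(x,y) ≡ G̃(t,s,x,y) = ∑_{n≥0} t^n ∑_{(k,a,b)} p̃_{n,(k,a,b)} s^k x^a y^b, an element of ℤ[s,s^{−1},x,y][[t]]. Then G̃ satisfies the functional equation G̃(x,y) = 1 + t·x·y·G̃(x,y) + (t/x)(G̃(x,y) − G̃(0,y)) + (t/y)(G̃(x,y) − G̃(x,0)) + (t·s/x)(G̃(0,x) − G̃(0,0)) + t·s^{−1}·y²·G̃(y,0), where the substituted series and the quotients by x and y are well defined in ℤ[s,s^{−1},x,y][[t]]. -/

import Mathlib

open scoped BigOperators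
noncomputable section

abbrev WSt : Type := ℤ × ℕ × ℕ

def cellStep (v w : WSt) : Prop :=
  w = (v.1, v.2.1 + 1, v.2.2 + 1) ∨
  (1 ≤ v.2.2 ∧ w = (v.1, v.2.1, v.2.2 - 1)) ∨
  (1 ≤ v.2.1 ∧ w = (v.1, v.2.1 - 1, v.2.2)) ∨
  (v.2.1 = 0 ∧ w = (v.1 + 1, v.2.2, 0)) ∨
  (v.2.2 = 0 ∧ w = (v.1 - 1, 0, v.2.1 + 1))

def vertStep (v w : WSt) : Prop :=
  w = (v.1, v.2.1 + 1, v.2.2 + 1) ∨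
  (1 ≤ v.2.2 ∧ w = (v.1, v.2.1, v.2.2 - 1)) ∨
  (1 ≤ v.2.1 ∧ w = (v.1, v.2.1 - 1, v.2.2)) ∨
  (v.2.1 = 0 ∧ 1 ≤ v.2.2 ∧ w = (v.1 + 1, v.2.2 - 1, 0)) ∨
  (v.2.2 = 0 ∧ w = (v.1 - 1, 0, v.2.1 + 2))

def pathCount (step : WSt → WSt → Prop) (n : ℕ) (v : WSt) : ℕ :=
  Nat.card {p : Fin (n + 1) → WSt //
    p 0 = ((0 : ℤ), 0, 0) ∧ p (Fin.last n) = v ∧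
    ∀ i : Fin n, step (p i.castSucc) (p i.succ)}

/-- number of cell-centred excursions of length `n` with winding angle `2πk/3` -/
def eCell (n : ℕ) (k : ℤ) : ℕ := pathCount cellStep n (k, 0, 0)

/-- number of vertex-centred walks of length `n` with winding angle `2πk/3` -/
def eVert (n : ℕ) (k : ℤ) : ℕ := pathCount vertStep n (k, 0, 0)

/-- The series `T_k(u,q)`. -/
def Tk (k : ℕ) (u q : ℂ) : ℂ :=
  ∑' n : ℕ, (-1 : ℂ) ^ n * ((2 * n + 1 : ℕ) : ℂ) ^ k * q ^ (n * (n + 1) / 2) *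
    (u ^ (n + 1) - (-1 : ℂ) ^ k * u ^ (-(n : ℤ)))

/-- Jacobi theta function θ₁₁. -/
def jTheta (z τ : ℂ) : ℂ :=
  ∑' n : ℤ, (-1 : ℂ) ^ n *
    Complex.exp (((2 * (n : ℂ) + 1) / 2) ^ 2 * Complex.I * (Real.pi : ℂ) * τ +
      (2 * (n : ℂ) + 1) * Complex.I * z)

/-- derivative of θ with respect to z -/
def jTheta' (z τ : ℂ) : ℂ := deriv (fun w => jTheta w τ) z

/-- The ring `ℤ[s, s⁻¹]` of Laurent polynomials in the winding variable `s`. -/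
abbrev LZ := LaurentPolynomial ℤ

/-- Coefficient of `t^n x^a y^b` (with `d 0 = n`, `d 1 = a`, `d 2 = b`) in the full
generating function `G̃(t,s,x,y)` of vertex-centred Kreweras walks: `∑_k p̃_{n,(k,a,b)} s^k`.
Since a walk of length `n` has wedge index of absolute value at most `n`, the sum is finite. -/
def vertCoeff (d : Fin 3 →₀ ℕ) : LZ :=
  ∑ k ∈ Finset.Icc (-(d 0 : ℤ)) (d 0 : ℤ),
    (pathCount vertStep (d 0) (k, d 1, d 2) : LZ) * LaurentPolynomial.T k

/-- `G̃(x,y)`, an element of `ℤ[s,s⁻¹][[t,x,y]]` (containing `ℤ[s,s⁻¹,x,y][[t]]`). -/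
def vertGL : MvPowerSeries (Fin 3) LZ := fun d => vertCoeff d

/-- `G̃(0,y)` -/
def vertGL0y : MvPowerSeries (Fin 3) LZ := fun d => if d 1 = 0 then vertCoeff d else 0

/-- `G̃(x,0)` -/
def vertGLx0 : MvPowerSeries (Fin 3) LZ := fun d => if d 2 = 0 then vertCoeff d else 0

/-- `G̃(0,x)`: the series in `t`, `x` whose coefficient of `t^n x^a` is `∑_k p̃_{n,(k,0,a)} s^k`. -/
def vertGL0x : MvPowerSeries (Fin 3) LZ := fun d =>
  if d 2 = 0 then
    ∑ k ∈ Finset.Icc (-(d 0 : ℤ)) (d 0 : ℤ),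
      (pathCount vertStep (d 0) (k, 0, d 1) : LZ) * LaurentPolynomial.T k
  else 0

/-- `G̃(y,0)`: the series in `t`, `y` whose coefficient of `t^n y^b` is `∑_k p̃_{n,(k,b,0)} s^k`. -/
def vertGLy0 : MvPowerSeries (Fin 3) LZ := fun d =>
  if d 1 = 0 then
    ∑ k ∈ Finset.Icc (-(d 0 : ℤ)) (d 0 : ℤ),
      (pathCount vertStep (d 0) (k, d 2, 0) : LZ) * LaurentPolynomial.T k
  else 0

/-- `G̃(0,0)`: the series in `t` whose coefficient of `t^n` is `∑_k p̃_{n,(k,0,0)} s^k`. -/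
def vertGL00 : MvPowerSeries (Fin 3) LZ := fun d =>
  if d 1 = 0 ∧ d 2 = 0 then vertCoeff d else 0

/-!
Splitting off the last step of a walk expresses `p̃_{n+1,v}` as a sum of `p̃_{n,w}` over the (at most
five) predecessors `w` of `v`; multiplied by `t^{n+1} s^k x^a y^b` and summed, each kind of step
contributes one term of the functional equation. The two steps that change wedges shift the index
`k`, which becomes multiplication by `s^{±1}`: this is compatible with the truncation `|k| ≤ n` in
`vertCoeff` because a walk of length `n` never reaches a wedge `k` with `|k| > n`.
-/

section Walks

variable (step : WSt → WSt → Prop)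

def OriginWalk (n : ℕ) (v : WSt) : Type :=
  {p : Fin (n + 1) → WSt //
    p 0 = ((0 : ℤ), 0, 0) ∧ p (Fin.last n) = v ∧
    ∀ i : Fin n, step (p i.castSucc) (p i.succ)}

theorem pathCount_eq_card (n : ℕ) (v : WSt) :
    pathCount step n v = Nat.card (OriginWalk step n v) := rfl

theorem OriginWalk.subsingleton_zero (v : WSt) : Subsingleton (OriginWalk step 0 v) :=
  ⟨fun p q => Subtype.ext <| funext fun i => by rw [Fin.fin_one_eq_zero i, p.2.1, q.2.1]⟩

def OriginWalk.succEquiv (n : ℕ) (v : WSt) :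
    OriginWalk step (n + 1) v ≃ Σ w : {w : WSt // step w v}, OriginWalk step n w where
  toFun p := ⟨⟨p.1 (Fin.last n).castSucc, by simpa [p.2.2.1] using p.2.2.2 (Fin.last n)⟩,
    ⟨fun i => p.1 i.castSucc, by simpa using p.2.1, rfl,
      fun i => by simpa using p.2.2.2 i.castSucc⟩⟩
  invFun x := ⟨Fin.snoc x.2.1 v, by
      refine ⟨?_, Fin.snoc_last _ _, fun i => ?_⟩
      · exact (Fin.snoc_castSucc (α := fun _ => WSt) _ _ 0).trans x.2.2.1
      induction i using Fin.lastCases with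
      | last =>
        rw [Fin.succ_last, Fin.snoc_last, Fin.snoc_castSucc, x.2.2.2.1]
        exact x.1.2
      | cast j =>
        rw [Fin.succ_castSucc, Fin.snoc_castSucc, Fin.snoc_castSucc]
        exact x.2.2.2.2 j⟩
  left_inv := by
    rintro ⟨p, h0, hl, hs⟩
    refine Subtype.ext <| funext fun i => ?_
    induction i using Fin.lastCases with
    | last => simp [hl]
    | cast j => simp
  right_inv := by
    rintro ⟨⟨w, hw⟩, ⟨q, h0, hl, hs⟩⟩
    exact Sigma.subtype_ext (Subtype.ext (by simp [hl])) (by simp)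

theorem pathCount_zero (v : WSt) :
    pathCount step 0 v = if v = ((0 : ℤ), 0, 0) then 1 else 0 := by
  have := OriginWalk.subsingleton_zero step v
  rw [pathCount_eq_card]
  split_ifs with hv
  · subst hv
    exact Nat.card_of_subsingleton ⟨fun _ => _, rfl, rfl, Fin.elim0⟩
  · have : IsEmpty (OriginWalk step 0 v) := ⟨fun p => hv (p.2.2.1.symm.trans p.2.1)⟩
    exact Nat.card_of_isEmpty

variable (pred : WSt → Finset WSt) (mem_pred : ∀ v w, w ∈ pred v ↔ step w v)
include mem_pred

theorem OriginWalk.finite (n : ℕ) (v : WSt) : Finite (OriginWalk step n v) := by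
  induction n generalizing v with
  | zero =>
    have := OriginWalk.subsingleton_zero step v
    exact Finite.of_subsingleton
  | succ n ih =>
    have := Fintype.subtype (pred v) (mem_pred v)
    exact Finite.of_equiv _ (OriginWalk.succEquiv step n v).symm

theorem pathCount_succ (n : ℕ) (v : WSt) :
    pathCount step (n + 1) v = ∑ w ∈ pred v, pathCount step n w := by
  have := OriginWalk.finite step pred mem_pred
  have := Fintype.subtype (pred v) (mem_pred v)
  rw [pathCount_eq_card, Nat.card_congr (OriginWalk.succEquiv step n v), Nat.card_sigma,
    Finset.sum_subtype (pred v) (mem_pred v) (fun w => pathCount step n w)]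
  rfl

end Walks

section VertStep

instance (v w : WSt) : Decidable (vertStep v w) := by unfold vertStep; infer_instance

def vertPred (v : WSt) : Finset WSt :=
  ({(v.1, v.2.1 - 1, v.2.2 - 1), (v.1, v.2.1, v.2.2 + 1), (v.1, v.2.1 + 1, v.2.2),
    (v.1 - 1, 0, v.2.1 + 1), (v.1 + 1, v.2.2 - 2, 0)} : Finset WSt).filter (vertStep · v)

theorem mem_vertPred (v w : WSt) : w ∈ vertPred v ↔ vertStep w v := by
  refine ⟨fun h => (Finset.mem_filter.mp h).2, fun h => Finset.mem_filter.mpr ⟨?_, h⟩⟩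
  obtain ⟨k, a, b⟩ := v
  obtain ⟨k', a', b'⟩ := w
  simp only [Finset.mem_insert, Finset.mem_singleton]
  rcases h with h | ⟨_, h⟩ | ⟨_, h⟩ | ⟨_, _, h⟩ | ⟨_, h⟩ <;> simp_all [Prod.ext_iff]

theorem pathCount_vertStep_succ (n : ℕ) (k : ℤ) (a b : ℕ) :
    pathCount vertStep (n + 1) (k, a, b) =
      (if 1 ≤ a ∧ 1 ≤ b then pathCount vertStep n (k, a - 1, b - 1) else 0)
      + pathCount vertStep n (k, a, b + 1)
      + pathCount vertStep n (k, a + 1, b)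
      + (if b = 0 then pathCount vertStep n (k - 1, 0, a + 1) else 0)
      + (if a = 0 ∧ 2 ≤ b then pathCount vertStep n (k + 1, b - 2, 0) else 0) := by
  rw [pathCount_succ vertStep vertPred mem_vertPred, vertPred, Finset.sum_filter]
  dsimp only
  rw [Finset.sum_insert (by simp [Prod.ext_iff]; omega),
    Finset.sum_insert (by simp [Prod.ext_iff]; omega),
    Finset.sum_insert (by simp), Finset.sum_insert (by simp), Finset.sum_singleton]
  have hNE : vertStep (k, a - 1, b - 1) (k, a, b) ↔ 1 ≤ a ∧ 1 ≤ b := by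
    simp [vertStep, Prod.ext_iff]; omega
  have hS : vertStep (k, a, b + 1) (k, a, b) := by simp [vertStep]
  have hW : vertStep (k, a + 1, b) (k, a, b) := by simp [vertStep]
  have hNext : vertStep (k - 1, 0, a + 1) (k, a, b) ↔ b = 0 := by
    simp [vertStep, Prod.ext_iff]; omega
  have hPrev : vertStep (k + 1, b - 2, 0) (k, a, b) ↔ a = 0 ∧ 2 ≤ b := by
    simp [vertStep, Prod.ext_iff]; omega
  simp only [hNE, hS, hW, hNext, hPrev, if_true]
  omega

/-- Each step changes the wedge index by at most one. -/
theorem pathCount_vertStep_eq_zero {n : ℕ} {k : ℤ} (hk : (n : ℤ) < |k|) (a b : ℕ) :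
    pathCount vertStep n (k, a, b) = 0 := by
  induction n generalizing k a b with
  | zero =>
    refine (pathCount_zero _ _).trans (if_neg fun h => ?_)
    simp [(Prod.mk.inj h).1] at hk
  | succ n ih =>
    have hshift : ∀ j : ℤ, |j| ≤ 1 → (n : ℤ) < |k + j| := fun j hj => by
      rw [abs_le] at hj; push_cast at hk; cases abs_cases k <;> cases abs_cases (k + j) <;> omega
    rw [pathCount_vertStep_succ, ih (by simpa using hshift 0 (by simp)),
      ih (by simpa using hshift 0 (by simp)), ih (by simpa using hshift 0 (by simp)),
      ih (by simpa [sub_eq_add_neg] using hshift (-1) (by simp)), ih (hshift 1 (by simp))]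
    simp

end VertStep

section WindingPoly

open LaurentPolynomial

def windingPoly (n a b : ℕ) : LZ :=
  ∑ k ∈ Finset.Icc (-(n : ℤ)) n, (pathCount vertStep n (k, a, b) : LZ) * T k

/-- By `pathCount_vertStep_eq_zero`, the sum may be taken over any window `[-N, N]` containing the
shifted range. -/
theorem T_mul_windingPoly (m : ℤ) {n N : ℕ} (hN : (n : ℤ) + |m| ≤ N) (a b : ℕ) :
    T m * windingPoly n a b =
      ∑ k ∈ Finset.Icc (-(N : ℤ)) N, (pathCount vertStep n (k - m, a, b) : LZ) * T k := by
  have hm := abs_le.mp (le_refl |m|)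
  have hsub : Finset.Icc (-(n : ℤ) + m) (n + m) ⊆ Finset.Icc (-(N : ℤ)) N :=
    Finset.Icc_subset_Icc (by omega) (by omega)
  rw [← Finset.sum_subset hsub, ← Finset.map_add_right_Icc, Finset.sum_map, windingPoly,
    Finset.mul_sum]
  · refine Finset.sum_congr rfl fun j _ => ?_
    simp only [addRightEmbedding_apply, add_sub_cancel_right, T_add]
    ring
  · intro k _ hk
    rw [Finset.mem_Icc, not_and_or, not_le, not_le] at hk
    rw [pathCount_vertStep_eq_zero (by cases abs_cases (k - m) <;> omega), Nat.cast_zero, zero_mul]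

theorem windingPoly_eq_sum_Icc {n N : ℕ} (hN : n ≤ N) (a b : ℕ) :
    windingPoly n a b =
      ∑ k ∈ Finset.Icc (-(N : ℤ)) N, (pathCount vertStep n (k, a, b) : LZ) * T k := by
  simpa using T_mul_windingPoly 0 (n := n) (N := N) (by simpa using hN) a b

theorem windingPoly_zero (a b : ℕ) : windingPoly 0 a b = if a = 0 ∧ b = 0 then 1 else 0 := by
  simp [windingPoly, pathCount_zero]

theorem windingPoly_succ (n a b : ℕ) :
    windingPoly (n + 1) a b =
      (if 1 ≤ a ∧ 1 ≤ b then windingPoly n (a - 1) (b - 1) else 0)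
      + windingPoly n a (b + 1)
      + windingPoly n (a + 1) b
      + (if b = 0 then T 1 * windingPoly n 0 (a + 1) else 0)
      + (if a = 0 ∧ 2 ≤ b then T (-1) * windingPoly n (b - 2) 0 else 0) := by
  have hN : n ≤ n + 1 := n.le_succ
  have hN' : ∀ m : ℤ, |m| = 1 → (n : ℤ) + |m| ≤ (n + 1 : ℕ) := fun m hm => by simp [hm]
  rw [windingPoly, windingPoly_eq_sum_Icc hN, windingPoly_eq_sum_Icc hN, windingPoly_eq_sum_Icc hN,
    T_mul_windingPoly 1 (hN' 1 (by simp)), T_mul_windingPoly (-1) (hN' (-1) (by simp))]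
  simp only [Finset.ite_sum_zero, ← Finset.sum_add_distrib]
  refine Finset.sum_congr rfl fun k _ => ?_
  rw [pathCount_vertStep_succ, sub_neg_eq_add]
  push_cast [apply_ite (fun x : ℕ => (x : LZ))]
  split_ifs <;> ring

end WindingPoly

namespace MvPowerSeries

variable {σ R : Type*} [CommSemiring R]

/-- The quotient `(f - f|_{X i = 0}) / X i`. -/
def divX (i : σ) (f : MvPowerSeries σ R) : MvPowerSeries σ R := fun d => coeff (d + .single i 1) f

def setXZero (i : σ) (f : MvPowerSeries σ R) : MvPowerSeries σ R :=
  fun d => if d i = 0 then coeff d f else 0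

theorem coeff_divX (i : σ) (f : MvPowerSeries σ R) (d : σ →₀ ℕ) :
    coeff d (divX i f) = coeff (d + .single i 1) f := rfl

theorem coeff_setXZero (i : σ) (f : MvPowerSeries σ R) (d : σ →₀ ℕ) :
    coeff d (setXZero i f) = if d i = 0 then coeff d f else 0 := rfl

theorem coeff_X_mul' (i : σ) (f : MvPowerSeries σ R) (d : σ →₀ ℕ) :
    coeff d (X i * f) = if d i = 0 then 0 else coeff (d - .single i 1) f := by
  simp only [X_def, coeff_monomial_mul, one_mul, Finsupp.single_le_iff, Nat.one_le_iff_ne_zero,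
    ite_not]

theorem X_mul_divX_add_setXZero (i : σ) (f : MvPowerSeries σ R) :
    X i * divX i f + setXZero i f = f := by
  ext d
  rw [map_add, coeff_X_mul', coeff_setXZero]
  by_cases h : d i = 0
  · simp [h]
  · rw [if_neg h, if_neg h, add_zero, coeff_divX,
      tsub_add_cancel_of_le (Finsupp.single_le_iff.mpr (Nat.one_le_iff_ne_zero.mpr h))]

end MvPowerSeries

section GeneratingFunction

open MvPowerSeries
open LaurentPolynomial (T)

theorem coeff_vertGL (d : Fin 3 →₀ ℕ) : coeff d vertGL = windingPoly (d 0) (d 1) (d 2) := rfl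

theorem coeff_vertGL0x (d : Fin 3 →₀ ℕ) :
    coeff d vertGL0x = if d 2 = 0 then windingPoly (d 0) 0 (d 1) else 0 := rfl

theorem coeff_vertGLy0 (d : Fin 3 →₀ ℕ) :
    coeff d vertGLy0 = if d 1 = 0 then windingPoly (d 0) (d 2) 0 else 0 := rfl

theorem vertGL0y_eq : vertGL0y = setXZero 1 vertGL := rfl

theorem vertGLx0_eq : vertGLx0 = setXZero 2 vertGL := rfl

theorem vertGL00_eq : vertGL00 = setXZero 1 vertGL0x := by
  refine MvPowerSeries.ext fun d => ?_
  rw [coeff_setXZero, coeff_vertGL0x]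
  show (if d 1 = 0 ∧ d 2 = 0 then windingPoly (d 0) (d 1) (d 2) else 0) = _
  by_cases h1 : d 1 = 0 <;> by_cases h2 : d 2 = 0 <;> simp [h1, h2]

theorem vertGL_eq :
    vertGL = 1 + X 0 * X 1 * X 2 * vertGL + X 0 * divX 1 vertGL + X 0 * divX 2 vertGL +
      X 0 * C (T 1) * divX 1 vertGL0x + X 0 * C (T (-1)) * X 2 ^ 2 * vertGLy0 := by
  refine MvPowerSeries.ext fun d => ?_
  simp only [map_add, mul_assoc, pow_two, coeff_X_mul', coeff_C_mul, coeff_one, coeff_divX,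
    coeff_vertGL, coeff_vertGL0x, coeff_vertGLy0, Finsupp.coe_tsub, Finsupp.coe_add, Pi.sub_apply,
    Pi.add_apply, Finsupp.single_apply, Fin.reduceEq, if_true, if_false, tsub_zero, add_zero]
  have hd : d = 0 ↔ d 0 = 0 ∧ d 1 = 0 ∧ d 2 = 0 := by simp [Finsupp.ext_iff, Fin.forall_fin_succ]
  simp only [hd]
  generalize d 0 = n, d 1 = a, d 2 = b
  cases n with
  | zero => simp [windingPoly_zero]
  | succ n =>
    rw [windingPoly_succ]
    simp only [Nat.add_sub_cancel, Nat.add_one_ne_zero, false_and, if_false, zero_add, Nat.sub_sub,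
      Nat.reduceAdd]
    split_ifs <;> first | (exfalso; omega) | ring

end GeneratingFunction

/-- equation (5): the functional equation for `G̃(x,y)`.  Here `Q1`, `Q2`,
`Q3` are the well-defined quotients `(G̃(x,y) − G̃(0,y))/x`, `(G̃(x,y) − G̃(x,0))/y` and
`(G̃(0,x) − G̃(0,0))/x`. -/
theorem vertex_functional_equation :
    ∃ Q1 Q2 Q3 : MvPowerSeries (Fin 3) LZ,
      MvPowerSeries.X 1 * Q1 = vertGL - vertGL0y ∧
      MvPowerSeries.X 2 * Q2 = vertGL - vertGLx0 ∧
      MvPowerSeries.X 1 * Q3 = vertGL0x - vertGL00 ∧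
      vertGL = 1 + MvPowerSeries.X 0 * MvPowerSeries.X 1 * MvPowerSeries.X 2 * vertGL +
        MvPowerSeries.X 0 * Q1 + MvPowerSeries.X 0 * Q2 +
        MvPowerSeries.X 0 * MvPowerSeries.C (σ := Fin 3) (R := LZ) (LaurentPolynomial.T 1) * Q3 +
        MvPowerSeries.X 0 * MvPowerSeries.C (σ := Fin 3) (R := LZ) (LaurentPolynomial.T (-1)) *
          MvPowerSeries.X 2 ^ 2 * vertGLy0 := by
  refine ⟨.divX 1 vertGL, .divX 2 vertGL, .divX 1 vertGL0x, ?_, ?_, ?_, vertGL_eq⟩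
  · rw [vertGL0y_eq]
    exact eq_sub_of_add_eq (MvPowerSeries.X_mul_divX_add_setXZero 1 vertGL)
  · rw [vertGLx0_eq]
    exact eq_sub_of_add_eq (MvPowerSeries.X_mul_divX_add_setXZero 2 vertGL)
  · rw [vertGL00_eq]
    exact eq_sub_of_add_eq (MvPowerSeries.X_mul_divX_add_setXZero 1 vertGL0x)
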